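/- Assume lim_{s→∞} f'(s)F(s) = q with q > 1. Let η : [ρ₀,∞) → ℝ satisfy η(ρ) → 0 as ρ → ∞. Then φ(ρ)(1+η(ρ)) > 0 for all sufficiently large ρ and lim_{ρ→∞} F(φ(ρ)(1+η(ρ)))/F(φ(ρ)) = 1. -/

import Mathlib

open Set Filter Topology MeasureTheory Real

/-!
Since `(f F)' = f' F - 1 → q - 1 > 0`, eventually `f(s) F(s) ≥ c s` with `c = (q - 1) / 4`.
As `F' = -1/f`, this says `|(log F)'(s)| ≤ 1 / (c s)`, so by the mean value theorem
`|log F(x y) - log F(x)| ≤ 2 |y - 1| / c` for large `x` and `y ≥ 1/2`. Hence `F(x y) / F(x) → 1`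
as `x → ∞` and `y → 1`, and it remains to substitute `x = φ(ρ)`, `y = 1 + η(ρ)`.
-/

theorem hasDerivAt_integral_Ioi {g : ℝ → ℝ} {a s : ℝ} (hg : IntegrableOn g (Ioi a))
    (has : a < s) (hcont : ContinuousAt g s) :
    HasDerivAt (fun x => ∫ t in Ioi x, g t) (-g s) s := by
  have hmeas : StronglyMeasurableAtFilter g (𝓝 s) :=
    ⟨Ioi a, Ioi_mem_nhds has, hg.aestronglyMeasurable⟩
  have hint : IntervalIntegrable g volume a s :=
    (intervalIntegrable_iff_integrableOn_Ioc_of_le has.le).2 (hg.mono_set Ioc_subset_Ioi_self)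
  refine ((intervalIntegral.integral_hasDerivAt_right hint hmeas hcont).const_sub
    (∫ t in Ioi a, g t)).congr_of_eventuallyEq ?_
  filter_upwards [Ioi_mem_nhds has] with x hx
  rw [← intervalIntegral.integral_Ioi_sub_Ioi hg hx.le, sub_sub_cancel]

theorem setIntegral_Ioi_pos {g : ℝ → ℝ} {s : ℝ} (hg : IntegrableOn g (Ioi s))
    (hpos : ∀ t > s, 0 < g t) : 0 < ∫ t in Ioi s, g t := by
  rw [setIntegral_pos_iff_support_of_nonneg_ae ?_ hg]
  · have hsupp : Ioi s ⊆ Function.support g ∩ Ioi s := fun t ht => ⟨(hpos t ht).ne', ht⟩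
    exact (measure_mono hsupp).trans_lt' (by simp)
  · filter_upwards [ae_restrict_mem measurableSet_Ioi] with t ht using (hpos t ht).le

theorem eventually_mul_le_of_le_deriv {g g' : ℝ → ℝ} {c d : ℝ} (hcd : c < d)
    (hg : ∀ᶠ x in atTop, HasDerivAt g (g' x) x) (hg' : ∀ᶠ x in atTop, d ≤ g' x) :
    ∀ᶠ x in atTop, c * x ≤ g x := by
  obtain ⟨S, hS⟩ := eventually_atTop.1 (hg.and hg')
  have hgrowth : ∀ x ≥ S, d * (x - S) ≤ g x - g S := fun x hx =>
    (convex_Ici S).mul_sub_le_image_sub_of_le_deriv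
      (fun y hy => (hS y hy).1.continuousAt.continuousWithinAt)
      (fun y hy => (hS y (interior_subset hy)).1.differentiableAt.differentiableWithinAt)
      (fun y hy => (hS y (interior_subset hy)).1.deriv ▸ (hS y (interior_subset hy)).2)
      S self_mem_Ici x hx hx
  filter_upwards [eventually_ge_atTop S, eventually_ge_atTop ((d * S - g S) / (d - c))]
    with x hxS hx
  rw [div_le_iff₀ (sub_pos.2 hcd)] at hx
  nlinarith [hgrowth x hxS]

theorem eventually_mul_le_mul_of_tendsto_deriv_mul {f F : ℝ → ℝ} {q : ℝ} (hq : 1 < q)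
    (hf : ∀ᶠ s in atTop, DifferentiableAt ℝ f s) (hfpos : ∀ᶠ s in atTop, 0 < f s)
    (hF : ∀ᶠ s in atTop, HasDerivAt F (-(f s)⁻¹) s)
    (hlim : Tendsto (fun s => deriv f s * F s) atTop (𝓝 q)) :
    ∀ᶠ s in atTop, (q - 1) / 4 * s ≤ f s * F s := by
  refine eventually_mul_le_of_le_deriv (g' := fun s => deriv f s * F s - 1)
    (d := (q - 1) / 2) (by linarith) ?_ ?_
  · filter_upwards [hf, hfpos, hF] with s hfs hpos hFs
    have hprod := hfs.hasDerivAt.mul hFs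
    rwa [mul_neg, mul_inv_cancel₀ hpos.ne', ← sub_eq_add_neg] at hprod
  · filter_upwards [hlim.eventually (eventually_ge_nhds (by linarith : (q + 1) / 2 < q))]
      with s hs
    linarith

section LogDerivBound

variable {F F' : ℝ → ℝ} {K S : ℝ}

theorem abs_log_comp_mul_sub_log_le (hS : 0 < S) (hF : ∀ s ≥ S, 0 < F s)
    (hF' : ∀ s ≥ S, HasDerivAt F (F' s) s) (hbound : ∀ s ≥ S, s * |F' s| ≤ K * F s)
    {x y : ℝ} (hx : 2 * S ≤ x) (hy : 1 / 2 ≤ y) :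
    |log (F (x * y)) - log (F x)| ≤ 2 * K * |y - 1| := by
  have hx0 : 0 < x := by linarith
  have hsub : Ici (x / 2) ⊆ Ici S := Ici_subset_Ici.2 (by linarith)
  have hK : 0 ≤ K := nonneg_of_mul_nonneg_left ((by positivity : 0 ≤ S * |F' S|).trans
    (hbound S le_rfl)) (hF S le_rfl)
  have hderiv : ∀ s ∈ Ici (x / 2),
      HasDerivWithinAt (fun s => log (F s)) (F' s / F s) (Ici (x / 2)) s :=
    fun s hs => ((hF' s (hsub hs)).log (hF s (hsub hs)).ne').hasDerivWithinAt
  have hlogbound : ∀ s ∈ Ici (x / 2), ‖F' s / F s‖ ≤ 2 * K / x := by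
    intro s (hs : x / 2 ≤ s)
    have hFs := hF s (hsub hs)
    rw [Real.norm_eq_abs, abs_div, abs_of_pos hFs, div_le_div_iff₀ hFs hx0]
    nlinarith [hbound s (hsub hs), abs_nonneg (F' s)]
  have hmvt := Convex.norm_image_sub_le_of_norm_hasDerivWithin_le hderiv hlogbound (convex_Ici _)
    (show x ∈ Ici (x / 2) by simp; linarith) (show x * y ∈ Ici (x / 2) by simp; nlinarith)
  calc |log (F (x * y)) - log (F x)| ≤ 2 * K / x * |x * y - x| := hmvt
    _ = 2 * K * |y - 1| := by
      rw [← mul_sub_one, abs_mul, abs_of_pos hx0]; field_simp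

theorem tendsto_comp_mul_div_of_mul_abs_deriv_le (hF : ∀ᶠ s in atTop, 0 < F s)
    (hF' : ∀ᶠ s in atTop, HasDerivAt F (F' s) s)
    (hbound : ∀ᶠ s in atTop, s * |F' s| ≤ K * F s) :
    Tendsto (fun p : ℝ × ℝ => F (p.1 * p.2) / F p.1) (atTop ×ˢ 𝓝 1) (𝓝 1) := by
  obtain ⟨S, hS⟩ := eventually_atTop.1 ((eventually_gt_atTop 0).and (hF.and (hF'.and hbound)))
  have hnear : ∀ᶠ p : ℝ × ℝ in atTop ×ˢ 𝓝 1, 2 * S ≤ p.1 ∧ 1 / 2 ≤ p.2 :=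
    prod_mem_prod (eventually_ge_atTop _) (eventually_ge_nhds (by norm_num))
  have hlog : Tendsto (fun p : ℝ × ℝ => log (F (p.1 * p.2)) - log (F p.1))
      (atTop ×ˢ 𝓝 1) (𝓝 0) := by
    have hdist : Tendsto (fun p : ℝ × ℝ => 2 * K * |p.2 - 1|) (atTop ×ˢ 𝓝 1) (𝓝 0) := by
      simpa using ((tendsto_snd.sub_const 1).abs.const_mul (2 * K) :
        Tendsto (fun p : ℝ × ℝ => 2 * K * |p.2 - 1|) (atTop ×ˢ 𝓝 1) _)
    refine squeeze_zero_norm' ?_ hdist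
    filter_upwards [hnear] with p hp
    exact abs_log_comp_mul_sub_log_le (hS S le_rfl).1 (fun s hs => (hS s hs).2.1)
      (fun s hs => (hS s hs).2.2.1) (fun s hs => (hS s hs).2.2.2) hp.1 hp.2
  have hexp : Tendsto (fun p : ℝ × ℝ => exp (log (F (p.1 * p.2)) - log (F p.1)))
      (atTop ×ˢ 𝓝 1) (𝓝 1) := by simpa using hlog.rexp
  refine hexp.congr' ?_
  filter_upwards [hnear] with p hp
  have hS0 := (hS S le_rfl).1
  have hpos₁ := (hS p.1 (by linarith)).2.1
  have hpos₂ := (hS (p.1 * p.2) (by nlinarith)).2.1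
  simp only [exp_sub, exp_log hpos₁, exp_log hpos₂]

end LogDerivBound

theorem F_ratio_tendsto_one_general (f F : ℝ → ℝ) (q : ℝ) (hq : 1 < q)
    (hf : ContDiffOn ℝ 2 f (Set.Ioi 0))
    (hfpos : ∀ s : ℝ, 0 < s → 0 < f s)
    (hfint : ∀ s : ℝ, 0 < s →
      MeasureTheory.IntegrableOn (fun t => (f t)⁻¹) (Set.Ioi s))
    (hF : ∀ s : ℝ, F s = ∫ t in Set.Ioi s, (f t)⁻¹)
    (hlim : Filter.Tendsto (fun s => deriv f s * F s) Filter.atTop (nhds q))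
    (φ : ℝ → ℝ)
    (hφtop : Filter.Tendsto φ Filter.atTop Filter.atTop)
    (η : ℝ → ℝ) (hη : Filter.Tendsto η Filter.atTop (nhds 0)) :
    (∀ᶠ ρ in Filter.atTop, 0 < φ ρ * (1 + η ρ)) ∧
    Filter.Tendsto (fun ρ => F (φ ρ * (1 + η ρ)) / F (φ ρ))
      Filter.atTop (nhds 1) := by
  have hdiff : ∀ s > 0, DifferentiableAt ℝ f s := fun s hs =>
    (hf.differentiableOn (by norm_num)).differentiableAt (Ioi_mem_nhds hs)
  have hFpos : ∀ s > 0, 0 < F s := fun s hs => hF s ▸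
    setIntegral_Ioi_pos (hfint s hs) fun t ht => inv_pos.2 (hfpos t (hs.trans ht))
  have hFderiv : ∀ s > 0, HasDerivAt F (-(f s)⁻¹) s := fun s hs => funext hF ▸
    hasDerivAt_integral_Ioi (hfint (s / 2) (by positivity)) (by linarith)
      ((hdiff s hs).continuousAt.inv₀ (hfpos s hs).ne')
  have hlarge := eventually_gt_atTop (0 : ℝ)
  have hgrowth := eventually_mul_le_mul_of_tendsto_deriv_mul hq (hlarge.mono hdiff)
    (hlarge.mono hfpos) (hlarge.mono hFderiv) hlim
  have hindex : ∀ᶠ s in atTop, s * |-(f s)⁻¹| ≤ 4 / (q - 1) * F s := by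
    filter_upwards [hlarge, hgrowth] with s hs hsF
    have hfs := hfpos s hs
    rw [abs_neg, abs_inv, abs_of_pos hfs, ← div_eq_mul_inv, div_le_iff₀ hfs,
      show 4 / (q - 1) * F s * f s = 4 * (f s * F s) / (q - 1) by ring,
      le_div_iff₀ (by linarith)]
    linarith
  have hratio := tendsto_comp_mul_div_of_mul_abs_deriv_le (hlarge.mono hFpos)
    (hlarge.mono hFderiv) hindex
  have hη' : Tendsto (fun ρ => 1 + η ρ) atTop (𝓝 1) := by simpa using hη.const_add 1
  exact ⟨(hφtop.atTop_mul_pos one_pos hη').eventually_gt_atTop 0,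
    hratio.comp (hφtop.prodMk hη')⟩

/-- If `f'(s)F(s) → q` with `q > 1`, `φ` as in the context and
`η(ρ) → 0` as `ρ → ∞`, then `φ(ρ)(1+η(ρ)) > 0` for all large `ρ` and
`F(φ(ρ)(1+η(ρ)))/F(φ(ρ)) → 1` as `ρ → ∞`. -/
theorem F_ratio_tendsto_one (f F : ℝ → ℝ) (q : ℝ) (hq : 1 < q)
    (hf : ContDiffOn ℝ 2 f (Set.Ioi 0))
    (hfpos : ∀ s : ℝ, 0 < s → 0 < f s)
    (hf'pos : ∀ s : ℝ, 0 < s → 0 < deriv f s)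
    (hfint : ∀ s : ℝ, 0 < s →
      MeasureTheory.IntegrableOn (fun t => (f t)⁻¹) (Set.Ioi s))
    (hF : ∀ s : ℝ, F s = ∫ t in Set.Ioi s, (f t)⁻¹)
    (hlim : Filter.Tendsto (fun s => deriv f s * F s) Filter.atTop (nhds q))
    (ρ₀ : ℝ) (φ : ℝ → ℝ)
    (hφpos : ∀ ρ ∈ Set.Ici ρ₀, 0 < φ ρ)
    (hφderiv : ∀ ρ ∈ Set.Ici ρ₀,
      HasDerivWithinAt φ (2 * f (φ ρ) * F (φ ρ)) (Set.Ici ρ₀) ρ)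
    (hφtop : Filter.Tendsto φ Filter.atTop Filter.atTop)
    (η : ℝ → ℝ) (hη : Filter.Tendsto η Filter.atTop (nhds 0)) :
    (∀ᶠ ρ in Filter.atTop, 0 < φ ρ * (1 + η ρ)) ∧
    Filter.Tendsto (fun ρ => F (φ ρ * (1 + η ρ)) / F (φ ρ))
      Filter.atTop (nhds 1) :=
  F_ratio_tendsto_one_general f F q hq hf hfpos hfint hF hlim φ hφtop η hη
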